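/- arXiv:2506.08720 — 2 statements merged into one kernel-verified Lean document; each statement's English description precedes it below -/
import Mathlib

section
/- Let H, Z be real m×n matrices, set Ĥ = H + Z, and let k ≤ min(m,n). Then ‖Π_k(Ĥ) − H‖_F ≤ 2‖Π_{2k}(Z)‖_F + 3‖H − Π_k(H)‖_F. -/
open Matrix Finset

attribute [local instance] Classical.propDecidable

/-- Frobenius norm of a real matrix. -/
noncomputable def frobNorm {m n : ℕ} (A : Matrix (Fin m) (Fin n) ℝ) : ℝ :=
  Real.sqrt (∑ i, ∑ j, (A i j) ^ 2)

/-- Frobenius inner product ⟨A,B⟩ = trace(AᵀB). -/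
noncomputable def frobInner {m n : ℕ} (A B : Matrix (Fin m) (Fin n) ℝ) : ℝ :=
  ∑ i, ∑ j, A i j * B i j

/-- Operator (spectral) norm of a real matrix w.r.t. Euclidean norms. -/
noncomputable def specNorm {m n : ℕ} (A : Matrix (Fin m) (Fin n) ℝ) : ℝ :=
  ⨆ x : {x : Fin n → ℝ // ∑ a, x a ^ 2 ≤ 1}, Real.sqrt (∑ a, (A.mulVec x.1) a ^ 2)

/-- A singular value decomposition of `M`: `M = ∑ i, s i • u i (v i)ᵀ` with
orthonormal `u`, `v` and nonincreasing nonnegative singular values `s`. -/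
structure SVDOf {m n : ℕ} (M : Matrix (Fin m) (Fin n) ℝ) where
  s : Fin (min m n) → ℝ
  u : Fin (min m n) → Fin m → ℝ
  v : Fin (min m n) → Fin n → ℝ
  s_nonneg : ∀ i, 0 ≤ s i
  s_anti : ∀ i j : Fin (min m n), i ≤ j → s j ≤ s i
  u_orth : ∀ i j, (∑ a, u i a * u j a) = if i = j then (1 : ℝ) else 0
  v_orth : ∀ i j, (∑ a, v i a * v j a) = if i = j then (1 : ℝ) else 0
  decomp : M = ∑ i, Matrix.of fun a b => s i * u i a * v i b

/-- Truncated SVD `Π_k(M)`: keep the `k` largest singular values. -/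
noncomputable def SVDOf.trunc {m n : ℕ} {M : Matrix (Fin m) (Fin n) ℝ}
    (D : SVDOf M) (k : ℕ) : Matrix (Fin m) (Fin n) ℝ :=
  ∑ i ∈ Finset.univ.filter (fun i : Fin (min m n) => (i : ℕ) < k),
    Matrix.of fun a b => D.s i * D.u i a * D.v i b

/-- Hard singular value thresholding `M(ξ)`: keep singular values `≥ ξ`. -/
noncomputable def SVDOf.thresh {m n : ℕ} {M : Matrix (Fin m) (Fin n) ℝ}
    (D : SVDOf M) (ξ : ℝ) : Matrix (Fin m) (Fin n) ℝ :=
  ∑ i ∈ Finset.univ.filter (fun i : Fin (min m n) => ξ ≤ D.s i),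
    Matrix.of fun a b => D.s i * D.u i a * D.v i b

/-!
Regard a matrix as the `ℓ²`-tuple of its rows, so that `‖·‖_F` is a Hilbert norm, and write
`A = Π_k(Ĥ)`, `B = Π_k(H)`. Eckart–Young gives `‖Ĥ - A‖ ≤ ‖Ĥ - B‖`; expanding both sides around
`H = Ĥ - Z` turns this into `‖A - H‖² ≤ ‖H - B‖² + 2⟨A - B, Z⟩`. The rows of `A - B` lie in the
span `K` of the top `k` right singular vectors of `Ĥ` and of `H`, so `dim K ≤ 2k` and
`⟨A - B, Z⟩ = ⟨A - B, P_K Z⟩ ≤ ‖A - B‖ ‖Π_{2k}(Z)‖`. With `‖A - B‖ ≤ ‖A - H‖ + ‖H - B‖` the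
quadratic inequality in `‖A - H‖` solves to `‖A - H‖ ≤ ‖H - B‖ + 2‖Π_{2k}(Z)‖`.

Eckart–Young and `‖P_K M‖ ≤ ‖Π_r(M)‖` for `dim K ≤ r` both come from
`‖P_K M‖² = ∑ sᵢ² ‖P_K vᵢ‖²`: the weights `‖P_K vᵢ‖²` lie in `[0, 1]` and, by Bessel's inequality,
sum to at most `dim K`, so the sum is at most that of the `r` largest `sᵢ²`.
-/

open scoped RealInnerProductSpace

theorem norm_sub_le_of_perturbed_closer {E : Type*} [NormedAddCommGroup E]
    [InnerProductSpace ℝ E] {h z a b : E} {c : ℝ} (hc : 0 ≤ c)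
    (hclose : ‖h + z - a‖ ≤ ‖h + z - b‖) (hinner : ⟪a - b, z⟫ ≤ ‖a - b‖ * c) :
    ‖a - h‖ ≤ ‖h - b‖ + 2 * c := by
  have hexpand : ‖a - h‖ ^ 2 ≤ ‖h - b‖ ^ 2 + 2 * ⟪a - b, z⟫ := by
    have ha : ‖a - h‖ ^ 2 = ‖h + z - a‖ ^ 2 - 2 * ⟪h + z - a, z⟫ + ‖z‖ ^ 2 := by
      rw [← norm_sub_sq_real, norm_sub_rev]; congr 2; abel
    have hb : ‖h + z - b‖ ^ 2 = ‖h - b‖ ^ 2 + 2 * ⟪h - b, z⟫ + ‖z‖ ^ 2 := by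
      rw [← norm_add_sq_real]; congr 2; abel
    have hab : ⟪a - b, z⟫ = ⟪h - b, z⟫ - ⟪h + z - a, z⟫ + ‖z‖ ^ 2 := by
      rw [← real_inner_self_eq_norm_sq, ← inner_sub_left, ← inner_add_left]; congr 1; abel
    nlinarith [norm_nonneg (h + z - a)]
  have htri : ‖a - b‖ ≤ ‖a - h‖ + ‖h - b‖ := norm_sub_le_norm_sub_add_norm_sub a h b
  nlinarith [norm_nonneg (a - h), norm_nonneg (h - b)]

theorem Orthonormal.sum_norm_sq_starProjection_le_finrank {E : Type*} [NormedAddCommGroup E]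
    [InnerProductSpace ℝ E] {κ : Type*} [Fintype κ] {v : κ → E} (hv : Orthonormal ℝ v)
    (K : Submodule ℝ E) [FiniteDimensional ℝ K] :
    ∑ i, ‖K.starProjection (v i)‖ ^ 2 ≤ Module.finrank ℝ K := by
  let b := stdOrthonormalBasis ℝ K
  have hproj (x : E) : ‖K.starProjection x‖ ^ 2 = ∑ j, ⟪x, b j⟫ ^ 2 := by
    rw [K.starProjection_apply, Submodule.norm_coe, ← b.sum_sq_inner_right]
    simp_rw [K.inner_orthogonalProjectionOnto_eq_of_mem_left, real_inner_comm]
  calc ∑ i, ‖K.starProjection (v i)‖ ^ 2 = ∑ j, ∑ i, ⟪v i, b j⟫ ^ 2 := by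
        simp_rw [hproj]; exact Finset.sum_comm
    _ ≤ ∑ j, ‖(b j : E)‖ ^ 2 := by
        gcongr with j
        simpa only [Real.norm_eq_abs, sq_abs] using
          hv.sum_inner_products_le (b j : E) (s := Finset.univ)
    _ = Module.finrank ℝ K := by simp [Submodule.norm_coe, b.norm_eq_one]

theorem sum_mul_le_sum_filter_lt {N r : ℕ} {a q : Fin N → ℝ} (ha : Antitone a)
    (ha₀ : ∀ i, 0 ≤ a i) (hq₀ : ∀ i, 0 ≤ q i) (hq₁ : ∀ i, q i ≤ 1) (hq : ∑ i, q i ≤ r) :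
    ∑ i, a i * q i ≤ ∑ i ∈ Finset.univ.filter (fun i : Fin N => (i : ℕ) < r), a i := by
  rcases lt_or_ge r N with hr | hr
  · -- with `c = a r`, every term of `∑ i, (a i - c) * (q i - [i < r])` is nonpositive
    set c := a ⟨r, hr⟩
    have hterm (i : Fin N) : a i * q i - (if (i : ℕ) < r then a i else 0)
        ≤ c * q i - (if (i : ℕ) < r then c else 0) := by
      split_ifs with hi
      · nlinarith [ha (show i ≤ ⟨r, hr⟩ from Fin.le_def.mpr hi.le), hq₁ i]
      · nlinarith [ha (show (⟨r, hr⟩ : Fin N) ≤ i from Fin.le_def.mpr (not_lt.mp hi)), hq₀ i]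
    have hcard : ((Finset.univ.filter fun i : Fin N => (i : ℕ) < r).card : ℝ) = r := by
      have : (Finset.univ.filter fun i : Fin N => (i : ℕ) < r) = Finset.Iio ⟨r, hr⟩ := by
        ext i; simp [Fin.lt_def]
      rw [this, Fin.card_Iio]
    have hsum := Finset.sum_le_sum fun i (_ : i ∈ Finset.univ) => hterm i
    simp only [Finset.sum_sub_distrib, ← Finset.sum_filter, ← Finset.mul_sum, Finset.sum_const,
      nsmul_eq_mul, hcard] at hsum
    nlinarith [ha₀ ⟨r, hr⟩]
  · have hall (i : Fin N) : (i : ℕ) < r := i.isLt.trans_le hr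
    simp only [hall, Finset.filter_true]
    gcongr with i
    nlinarith [ha₀ i, hq₁ i]

section Rowwise

variable {ι : Type*} {F : Type*} [NormedAddCommGroup F] [InnerProductSpace ℝ F]

def Submodule.rowwise (K : Submodule ℝ F) : Submodule ℝ (PiLp 2 fun _ : ι => F) where
  carrier := {X | ∀ a, X a ∈ K}
  add_mem' hX hY a := K.add_mem (hX a) (hY a)
  zero_mem' _ := K.zero_mem
  smul_mem' c _ hX a := K.smul_mem c (hX a)

theorem Submodule.rowwise_mono {K L : Submodule ℝ F} (h : K ≤ L) :
    (K.rowwise : Submodule ℝ (PiLp 2 fun _ : ι => F)) ≤ L.rowwise :=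
  fun _ hX a => h (hX a)

def rankOne (u : EuclideanSpace ℝ ι) (w : F) : PiLp 2 fun _ : ι => F :=
  WithLp.toLp 2 fun a => u a • w

theorem rankOne_mem_rowwise {K : Submodule ℝ F} (u : EuclideanSpace ℝ ι) {w : F} (hw : w ∈ K) :
    rankOne u w ∈ K.rowwise :=
  fun _ => K.smul_mem _ hw

variable [Fintype ι]

theorem inner_rankOne_rankOne (u u' : EuclideanSpace ℝ ι) (w w' : F) :
    ⟪rankOne u w, rankOne u' w'⟫ = ⟪u, u'⟫ * ⟪w, w'⟫ := by
  simp [rankOne, PiLp.inner_apply, real_inner_smul_left, real_inner_smul_right, Finset.sum_mul,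
    mul_assoc]

theorem norm_sq_sum_rankOne {κ : Type*} {u : κ → EuclideanSpace ℝ ι} (hu : Orthonormal ℝ u)
    (S : Finset κ) (w : κ → F) :
    ‖∑ i ∈ S, rankOne (u i) (w i)‖ ^ 2 = ∑ i ∈ S, ‖w i‖ ^ 2 := by
  classical
  rw [← real_inner_self_eq_norm_sq, sum_inner]
  refine Finset.sum_congr rfl fun i hi => ?_
  simp_rw [inner_sum, inner_rankOne_rankOne, orthonormal_iff_ite.mp hu, ite_mul, one_mul,
    zero_mul, Finset.sum_ite_eq, if_pos hi, real_inner_self_eq_norm_sq]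

theorem starProjection_rankOne [FiniteDimensional ℝ F] (K : Submodule ℝ F)
    (u : EuclideanSpace ℝ ι) (w : F) :
    K.rowwise.starProjection (rankOne u w) = rankOne u (K.starProjection w) := by
  refine Submodule.eq_starProjection_of_mem_of_inner_eq_zero
    (rankOne_mem_rowwise u (K.starProjection_apply_mem w)) fun X hX => ?_
  simp only [rankOne, PiLp.inner_apply, WithLp.ofLp_sub, Pi.sub_apply, ← smul_sub,
    real_inner_smul_left, K.starProjection_inner_eq_zero w _ (hX _), mul_zero,
    Finset.sum_const_zero]

end Rowwise

abbrev Rows (m n : ℕ) := PiLp 2 fun _ : Fin m => EuclideanSpace ℝ (Fin n)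

def Matrix.toRows {m n : ℕ} : Matrix (Fin m) (Fin n) ℝ →ₗ[ℝ] Rows m n where
  toFun A := WithLp.toLp 2 fun a => WithLp.toLp 2 (A a)
  map_add' _ _ := rfl
  map_smul' _ _ := rfl

@[simp]
theorem Matrix.toRows_apply_apply {m n : ℕ} (A : Matrix (Fin m) (Fin n) ℝ) (a : Fin m)
    (b : Fin n) : A.toRows a b = A a b :=
  rfl

theorem frobNorm_eq_norm_toRows {m n : ℕ} (A : Matrix (Fin m) (Fin n) ℝ) :
    frobNorm A = ‖A.toRows‖ := by
  rw [frobNorm, PiLp.norm_eq_of_L2]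
  simp [EuclideanSpace.norm_sq_eq]

namespace SVDOf

variable {m n : ℕ} {M : Matrix (Fin m) (Fin n) ℝ} (D : SVDOf M)

def leftVec (i : Fin (min m n)) : EuclideanSpace ℝ (Fin m) := WithLp.toLp 2 (D.u i)

def rightVec (i : Fin (min m n)) : EuclideanSpace ℝ (Fin n) := WithLp.toLp 2 (D.v i)

theorem orthonormal_leftVec : Orthonormal ℝ D.leftVec := by
  rw [orthonormal_iff_ite]
  intro i j
  simpa [leftVec, PiLp.inner_apply, mul_comm] using D.u_orth i j

theorem orthonormal_rightVec : Orthonormal ℝ D.rightVec := by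
  rw [orthonormal_iff_ite]
  intro i j
  simpa [rightVec, PiLp.inner_apply, mul_comm] using D.v_orth i j

theorem toRows_sum (S : Finset (Fin (min m n))) :
    (∑ i ∈ S, Matrix.of fun a b => D.s i * D.u i a * D.v i b).toRows
      = ∑ i ∈ S, rankOne (D.leftVec i) (D.s i • D.rightVec i) := by
  rw [map_sum]
  refine Finset.sum_congr rfl fun i _ => ?_
  ext a b
  simp [rankOne, leftVec, rightVec]
  ring

theorem norm_toRows_sum_sq (S : Finset (Fin (min m n))) :
    ‖(∑ i ∈ S, Matrix.of fun a b => D.s i * D.u i a * D.v i b).toRows‖ ^ 2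
      = ∑ i ∈ S, D.s i ^ 2 := by
  rw [toRows_sum, norm_sq_sum_rankOne D.orthonormal_leftVec]
  refine Finset.sum_congr rfl fun i _ => ?_
  rw [norm_smul, mul_pow, D.orthonormal_rightVec.1 i, Real.norm_eq_abs, sq_abs, one_pow, mul_one]

theorem toRows_eq : M.toRows = ∑ i, rankOne (D.leftVec i) (D.s i • D.rightVec i) := by
  conv_lhs => rw [D.decomp]
  exact D.toRows_sum _

theorem norm_toRows_sq : ‖M.toRows‖ ^ 2 = ∑ i, D.s i ^ 2 := by
  conv_lhs => rw [D.decomp]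
  exact D.norm_toRows_sum_sq _

theorem norm_toRows_trunc_sq (k : ℕ) :
    ‖(D.trunc k).toRows‖ ^ 2
      = ∑ i ∈ Finset.univ.filter (fun i : Fin (min m n) => (i : ℕ) < k), D.s i ^ 2 :=
  D.norm_toRows_sum_sq _

theorem norm_toRows_sub_trunc_sq (k : ℕ) :
    ‖M.toRows - (D.trunc k).toRows‖ ^ 2 = ‖M.toRows‖ ^ 2 - ‖(D.trunc k).toRows‖ ^ 2 := by
  have htail : M - D.trunc k
      = ∑ i ∈ Finset.univ.filter (fun i : Fin (min m n) => ¬ (i : ℕ) < k),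
          Matrix.of fun a b => D.s i * D.u i a * D.v i b := by
    rw [sub_eq_iff_eq_add', trunc, Finset.sum_filter_add_sum_filter_not]
    exact D.decomp
  rw [← map_sub, htail, D.norm_toRows_sum_sq, D.norm_toRows_sq, D.norm_toRows_trunc_sq,
    ← Finset.sum_filter_add_sum_filter_not Finset.univ (fun i : Fin (min m n) => (i : ℕ) < k),
    add_sub_cancel_left]

theorem norm_sq_starProjection_toRows (K : Submodule ℝ (EuclideanSpace ℝ (Fin n))) :
    ‖K.rowwise.starProjection M.toRows‖ ^ 2
      = ∑ i, D.s i ^ 2 * ‖K.starProjection (D.rightVec i)‖ ^ 2 := by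
  simp only [D.toRows_eq, map_sum, starProjection_rankOne, map_smul]
  rw [norm_sq_sum_rankOne D.orthonormal_leftVec]
  simp [norm_smul, mul_pow]

theorem norm_starProjection_toRows_le {K : Submodule ℝ (EuclideanSpace ℝ (Fin n))} {r : ℕ}
    (hK : Module.finrank ℝ K ≤ r) :
    ‖K.rowwise.starProjection M.toRows‖ ≤ ‖(D.trunc r).toRows‖ := by
  rw [← sq_le_sq₀ (norm_nonneg _) (norm_nonneg _), D.norm_sq_starProjection_toRows,
    D.norm_toRows_trunc_sq]
  refine sum_mul_le_sum_filter_lt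
    (fun i j hij => pow_le_pow_left₀ (D.s_nonneg j) (D.s_anti i j hij) 2)
    (fun i => sq_nonneg _) (fun i => sq_nonneg _) (fun i => ?_) ?_
  · simpa [D.orthonormal_rightVec.1 i] using
      pow_le_pow_left₀ (norm_nonneg _) (K.norm_starProjection_apply_le (D.rightVec i)) 2
  · exact (D.orthonormal_rightVec.sum_norm_sq_starProjection_le_finrank K).trans
      (by exact_mod_cast hK)

theorem norm_toRows_sub_trunc_le {K : Submodule ℝ (EuclideanSpace ℝ (Fin n))} {k : ℕ}
    (hK : Module.finrank ℝ K ≤ k) {B : Rows m n} (hB : B ∈ K.rowwise) :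
    ‖M.toRows - (D.trunc k).toRows‖ ≤ ‖M.toRows - B‖ := by
  set P := (K.rowwise : Submodule ℝ (Rows m n)).starProjection
  have hpyth : ‖M.toRows‖ ^ 2 = ‖P M.toRows‖ ^ 2 + ‖M.toRows - P M.toRows‖ ^ 2 := by
    rw [Submodule.norm_sq_eq_add_norm_sq_starProjection M.toRows K.rowwise,
      Submodule.starProjection_orthogonal']
    rfl
  have hmin : ‖M.toRows - P M.toRows‖ ≤ ‖M.toRows - B‖ := by
    rw [Submodule.starProjection_minimal]
    exact ciInf_le ⟨0, Set.forall_mem_range.mpr fun _ => norm_nonneg _⟩ (⟨B, hB⟩ : K.rowwise)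
  have hproj := D.norm_starProjection_toRows_le hK
  rw [← sq_le_sq₀ (norm_nonneg _) (norm_nonneg _), D.norm_toRows_sub_trunc_sq]
  nlinarith [norm_nonneg (P M.toRows), norm_nonneg (M.toRows - B),
    norm_nonneg (M.toRows - P M.toRows)]

theorem inner_toRows_le {K : Submodule ℝ (EuclideanSpace ℝ (Fin n))} {r : ℕ}
    (hK : Module.finrank ℝ K ≤ r) {X : Rows m n} (hX : X ∈ K.rowwise) :
    ⟪X, M.toRows⟫ ≤ ‖X‖ * ‖(D.trunc r).toRows‖ :=
  calc ⟪X, M.toRows⟫ = ⟪X, K.rowwise.starProjection M.toRows⟫ := by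
        rw [← Submodule.inner_starProjection_left_eq_right,
          Submodule.starProjection_eq_self_iff.mpr hX]
    _ ≤ ‖X‖ * ‖K.rowwise.starProjection M.toRows‖ := real_inner_le_norm _ _
    _ ≤ ‖X‖ * ‖(D.trunc r).toRows‖ := by gcongr; exact D.norm_starProjection_toRows_le hK

def topRightSpan (k : ℕ) : Submodule ℝ (EuclideanSpace ℝ (Fin n)) :=
  Submodule.span ℝ ((Finset.univ.filter fun i : Fin (min m n) => (i : ℕ) < k).image D.rightVec)

theorem finrank_topRightSpan_le (k : ℕ) : Module.finrank ℝ (D.topRightSpan k) ≤ k := by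
  refine (finrank_span_finset_le_card _).trans (Finset.card_image_le.trans ?_)
  simpa using Finset.card_le_card_of_injOn (t := Finset.range k)
    (fun i : Fin (min m n) => (i : ℕ)) (fun i hi => by simpa using hi) Fin.val_injective.injOn

theorem toRows_trunc_mem (k : ℕ) : (D.trunc k).toRows ∈ (D.topRightSpan k).rowwise := by
  rw [trunc, toRows_sum]
  refine Submodule.sum_mem _ fun i hi => rankOne_mem_rowwise _ (Submodule.smul_mem _ _ ?_)
  exact Submodule.subset_span (Finset.mem_coe.mpr (Finset.mem_image_of_mem _ hi))

end SVDOf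

theorem stmt3_general {m n : ℕ} (H Z : Matrix (Fin m) (Fin n) ℝ) (k : ℕ)
    (DH : SVDOf H) (DZ : SVDOf Z) (DHhat : SVDOf (H + Z)) :
    frobNorm (DHhat.trunc k - H) ≤
      2 * frobNorm (DZ.trunc (2 * k)) + 3 * frobNorm (H - DH.trunc k) := by
  set K := DHhat.topRightSpan k ⊔ DH.topRightSpan k
  have hK : Module.finrank ℝ K ≤ 2 * k := by
    have := Submodule.finrank_add_le_finrank_add_finrank (DHhat.topRightSpan k) (DH.topRightSpan k)
    linarith [DHhat.finrank_topRightSpan_le k, DH.finrank_topRightSpan_le k]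
  have hclose : ‖H.toRows + Z.toRows - (DHhat.trunc k).toRows‖
      ≤ ‖H.toRows + Z.toRows - (DH.trunc k).toRows‖ := by
    rw [← map_add]
    exact DHhat.norm_toRows_sub_trunc_le (DH.finrank_topRightSpan_le k) (DH.toRows_trunc_mem k)
  have hinner := DZ.inner_toRows_le hK
    (sub_mem (Submodule.rowwise_mono le_sup_left (DHhat.toRows_trunc_mem k))
      (Submodule.rowwise_mono le_sup_right (DH.toRows_trunc_mem k)))
  have hmain := norm_sub_le_of_perturbed_closer (norm_nonneg _) hclose hinner
  simp only [frobNorm_eq_norm_toRows, map_sub]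
  linarith [norm_nonneg (H.toRows - (DH.trunc k).toRows)]

/-- `‖Π_k(H+Z) − H‖_F ≤ 2‖Π_{2k}(Z)‖_F + 3‖H − Π_k(H)‖_F`. -/
theorem stmt3 {m n : ℕ} (H Z : Matrix (Fin m) (Fin n) ℝ) (k : ℕ) (hk : k ≤ min m n)
    (DH : SVDOf H) (DZ : SVDOf Z) (DHhat : SVDOf (H + Z)) :
    frobNorm (DHhat.trunc k - H) ≤
      2 * frobNorm (DZ.trunc (2 * k)) + 3 * frobNorm (H - DH.trunc k) :=
  stmt3_general H Z k DH DZ DHhat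
end

section
/- Let H, Z be real m×n matrices with rank(H) = n₀, set Ĥ = H + Z. Then for every k = 0, …, n₀: ‖Π_k(Ĥ) − H‖_F² ≤ 18 ( k‖Z‖₂² + Σ_{i=k+1}^{n₀} s_i(H)² ). -/
open Matrix Finset

attribute [local instance] Classical.propDecidable

open scoped Matrix.Norms.L2Operator

section DotProduct

variable {ι : Type*} [Fintype ι]

lemma dotProduct_self_nonneg (x : ι → ℝ) : 0 ≤ x ⬝ᵥ x :=
  Finset.sum_nonneg fun a _ => mul_self_nonneg (x a)

lemma sum_sq_eq_dotProduct_self (x : ι → ℝ) : ∑ a, x a ^ 2 = x ⬝ᵥ x := by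
  simp [dotProduct, sq]

lemma dotProduct_self_sub_le (x y : ι → ℝ) :
    (x - y) ⬝ᵥ (x - y) ≤ 2 * (x ⬝ᵥ x) + 2 * (y ⬝ᵥ y) := by
  simp only [dotProduct, Finset.mul_sum, ← Finset.sum_add_distrib, Pi.sub_apply]
  gcongr with a
  nlinarith [sq_nonneg (x a + y a)]

lemma norm_toLp_sq (x : ι → ℝ) : ‖(WithLp.toLp 2 x : EuclideanSpace ℝ ι)‖ ^ 2 = x ⬝ᵥ x := by
  rw [EuclideanSpace.norm_sq_eq]
  simp [dotProduct, sq]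

lemma sqrt_dotProduct_self (x : ι → ℝ) :
    √(x ⬝ᵥ x) = ‖(WithLp.toLp 2 x : EuclideanSpace ℝ ι)‖ := by
  rw [← norm_toLp_sq, Real.sqrt_sq (norm_nonneg _)]

end DotProduct

lemma norm_toLp_le_of_sq_le {ι κ : Type*} [Fintype ι] [Fintype κ] {x : ι → ℝ} {y : κ → ℝ} {a : ℝ}
    (ha : 0 ≤ a) (h : x ⬝ᵥ x ≤ a ^ 2 * (y ⬝ᵥ y)) : ‖WithLp.toLp 2 x‖ ≤ a * ‖WithLp.toLp 2 y‖ := by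
  rw [← pow_le_pow_iff_left₀ (norm_nonneg _) (by positivity) two_ne_zero, mul_pow, norm_toLp_sq,
    norm_toLp_sq]
  exact h

section Norms

variable {m n : ℕ}

lemma frobNorm_sq (X : Matrix (Fin m) (Fin n) ℝ) : frobNorm X ^ 2 = ∑ a, X a ⬝ᵥ X a := by
  rw [frobNorm, Real.sq_sqrt (by positivity)]
  simp only [sum_sq_eq_dotProduct_self]

lemma frobNorm_transpose (X : Matrix (Fin m) (Fin n) ℝ) : frobNorm Xᵀ = frobNorm X := by
  rw [frobNorm, frobNorm, Finset.sum_comm]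
  rfl

lemma frobNorm_sub_sq_le (X Y : Matrix (Fin m) (Fin n) ℝ) :
    frobNorm (X - Y) ^ 2 ≤ 2 * frobNorm X ^ 2 + 2 * frobNorm Y ^ 2 := by
  simp only [frobNorm_sq, Finset.mul_sum, ← Finset.sum_add_distrib]
  exact Finset.sum_le_sum fun a _ => dotProduct_self_sub_le (X a) (Y a)

lemma specNorm_eq_l2_opNorm (Z : Matrix (Fin m) (Fin n) ℝ) : specNorm Z = ‖Z‖ := by
  have hle (x : {x : Fin n → ℝ // ∑ a, x a ^ 2 ≤ 1}) : √(∑ a, (Z *ᵥ x.1) a ^ 2) ≤ ‖Z‖ := by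
    have hx : ‖(WithLp.toLp 2 x.1 : EuclideanSpace ℝ (Fin n))‖ ≤ 1 := by
      rw [← sqrt_dotProduct_self, ← sum_sq_eq_dotProduct_self]
      exact Real.sqrt_le_one.mpr x.2
    rw [sum_sq_eq_dotProduct_self, sqrt_dotProduct_self]
    simpa using (Z.l2_opNorm_mulVec _).trans (mul_le_of_le_one_right (norm_nonneg Z) hx)
  have : Nonempty {x : Fin n → ℝ // ∑ a, x a ^ 2 ≤ 1} := ⟨⟨0, by simp⟩⟩
  refine le_antisymm (ciSup_le hle) ?_
  refine ContinuousLinearMap.opNorm_le_of_unit_norm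
    (Real.iSup_nonneg fun _ => Real.sqrt_nonneg _) fun x hx => ?_
  have hx' : ∑ a, x a ^ 2 ≤ 1 := by
    rw [sum_sq_eq_dotProduct_self, ← norm_toLp_sq]
    simp [hx]
  refine le_trans ?_ (le_ciSup ⟨‖Z‖, Set.forall_mem_range.mpr hle⟩ ⟨x.ofLp, hx'⟩)
  rw [sum_sq_eq_dotProduct_self, sqrt_dotProduct_self]
  rfl

lemma specNorm_transpose (Z : Matrix (Fin m) (Fin n) ℝ) : specNorm Zᵀ = specNorm Z := by
  rw [specNorm_eq_l2_opNorm, specNorm_eq_l2_opNorm, ← conjTranspose_eq_transpose_of_trivial,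
    l2_opNorm_conjTranspose]

lemma norm_toLp_mulVec_le (Z : Matrix (Fin m) (Fin n) ℝ) (x : Fin n → ℝ) :
    ‖(WithLp.toLp 2 (Z *ᵥ x) : EuclideanSpace ℝ (Fin m))‖ ≤
      specNorm Z * ‖(WithLp.toLp 2 x : EuclideanSpace ℝ (Fin n))‖ := by
  rw [specNorm_eq_l2_opNorm]
  simpa using Z.l2_opNorm_mulVec (WithLp.toLp 2 x)

lemma dotProduct_mulVec_self_le (Z : Matrix (Fin m) (Fin n) ℝ) (x : Fin n → ℝ) :
    (Z *ᵥ x) ⬝ᵥ (Z *ᵥ x) ≤ specNorm Z ^ 2 * (x ⬝ᵥ x) := by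
  rw [← norm_toLp_sq, ← norm_toLp_sq, ← mul_pow]
  exact pow_le_pow_left₀ (norm_nonneg _) (norm_toLp_mulVec_le Z x) 2

lemma dotProduct_vecMul_self_le (Z : Matrix (Fin m) (Fin n) ℝ) (x : Fin m → ℝ) :
    (x ᵥ* Z) ⬝ᵥ (x ᵥ* Z) ≤ specNorm Z ^ 2 * (x ⬝ᵥ x) := by
  simpa [mulVec_transpose, specNorm_transpose] using dotProduct_mulVec_self_le Zᵀ x

lemma exists_sum_smul_orthogonal {α β κ : Type*} [Fintype κ] (w : α → κ → ℝ) (v : β → κ → ℝ)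
    {s : Finset α} {t : Finset β} (hst : #t < #s) :
    ∃ c : α → ℝ, (∃ a ∈ s, c a ≠ 0) ∧ ∀ b ∈ t, v b ⬝ᵥ ∑ a ∈ s, c a • w a = 0 := by
  let y : α → t → ℝ := fun a b => v b ⬝ᵥ w a
  have hy : ¬ LinearIndepOn ℝ y s := fun h => by
    have := h.fintype_card_le_finrank
    simp only [Finset.coe_sort_coe, Fintype.card_coe, Module.finrank_fintype_fun_eq_card] at this
    omega
  rw [linearIndepOn_finset_iff] at hy
  push Not at hy
  obtain ⟨c, hc, a, ha, hca⟩ := hy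
  refine ⟨c, ⟨a, ha, hca⟩, fun b hb => ?_⟩
  simpa [dotProduct_sum, dotProduct_smul, y] using congrFun hc ⟨b, hb⟩

section Orthonormal

variable {ι κ : Type*} [Fintype κ]

def IsOrthonormal [DecidableEq ι] (u : ι → κ → ℝ) : Prop :=
  ∀ i j, u i ⬝ᵥ u j = if i = j then 1 else 0

noncomputable def orthoProj (u : ι → κ → ℝ) (t : Finset ι) : Matrix κ κ ℝ :=
  ∑ i ∈ t, vecMulVec (u i) (u i)

lemma sum_smul_vecMulVec_mulVec {l : Type*} (s : ι → ℝ) (v : ι → l → ℝ) (w : ι → κ → ℝ)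
    (t : Finset ι) (x : κ → ℝ) :
    (∑ i ∈ t, s i • vecMulVec (v i) (w i)) *ᵥ x = ∑ i ∈ t, (s i * (w i ⬝ᵥ x)) • v i := by
  rw [sum_mulVec]
  refine Finset.sum_congr rfl fun i _ => ?_
  ext a
  simp only [smul_mulVec, vecMulVec_mulVec, Pi.smul_apply, smul_eq_mul,
    MulOpposite.smul_eq_mul_unop, MulOpposite.unop_op]
  ring

lemma orthoProj_mulVec (u : ι → κ → ℝ) (t : Finset ι) (y : κ → ℝ) :
    orthoProj u t *ᵥ y = ∑ i ∈ t, (u i ⬝ᵥ y) • u i := by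
  simpa [orthoProj] using sum_smul_vecMulVec_mulVec 1 u u t y

namespace IsOrthonormal

variable [DecidableEq ι] {u : ι → κ → ℝ}

lemma dotProduct_sum_smul (hu : IsOrthonormal u) (t : Finset ι) (c : ι → ℝ) (i : ι) :
    u i ⬝ᵥ ∑ j ∈ t, c j • u j = if i ∈ t then c i else 0 := by
  simp [dotProduct_sum, dotProduct_smul, hu i]

lemma sum_smul_dotProduct_self (hu : IsOrthonormal u) (t : Finset ι) (c : ι → ℝ) :
    (∑ i ∈ t, c i • u i) ⬝ᵥ (∑ i ∈ t, c i • u i) = ∑ i ∈ t, c i ^ 2 := by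
  rw [sum_dotProduct]
  refine Finset.sum_congr rfl fun i hi => ?_
  rw [smul_dotProduct, hu.dotProduct_sum_smul, if_pos hi, smul_eq_mul, sq]

lemma orthoProj_mulVec_self (hu : IsOrthonormal u) (t : Finset ι) (j : ι) :
    orthoProj u t *ᵥ u j = if j ∈ t then u j else 0 := by
  simp [orthoProj_mulVec, dotProduct_comm, hu j]

lemma dotProduct_self_sub_orthoProj (hu : IsOrthonormal u) (t : Finset ι) (y : κ → ℝ) :
    (y - orthoProj u t *ᵥ y) ⬝ᵥ (y - orthoProj u t *ᵥ y) =
      y ⬝ᵥ y - ∑ i ∈ t, (u i ⬝ᵥ y) ^ 2 := by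
  have hproj : (orthoProj u t *ᵥ y) ⬝ᵥ y = ∑ i ∈ t, (u i ⬝ᵥ y) ^ 2 := by
    simp [orthoProj_mulVec, sum_dotProduct, sq]
  rw [sub_dotProduct, dotProduct_sub, dotProduct_sub, dotProduct_comm y (orthoProj u t *ᵥ y), hproj,
    orthoProj_mulVec, hu.sum_smul_dotProduct_self]
  ring

lemma sum_sq_dotProduct_le (hu : IsOrthonormal u) (t : Finset ι) (y : κ → ℝ) :
    ∑ i ∈ t, (u i ⬝ᵥ y) ^ 2 ≤ y ⬝ᵥ y := by
  have := hu.dotProduct_self_sub_orthoProj t y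
  linarith [dotProduct_self_nonneg (y - orthoProj u t *ᵥ y)]

lemma dotProduct_self_sub_orthoProj_le (hu : IsOrthonormal u) (t : Finset ι) (y : κ → ℝ) :
    (y - orthoProj u t *ᵥ y) ⬝ᵥ (y - orthoProj u t *ᵥ y) ≤ y ⬝ᵥ y := by
  rw [hu.dotProduct_self_sub_orthoProj]
  linarith [Finset.sum_nonneg fun i (_ : i ∈ t) => sq_nonneg (u i ⬝ᵥ y)]

lemma linearIndependent (hu : IsOrthonormal u) : LinearIndependent ℝ u := by
  refine linearIndependent_iff'.mpr fun t c hc i hi => ?_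
  have := hu.dotProduct_sum_smul t c i
  rwa [hc, dotProduct_zero, if_pos hi, eq_comm] at this

end IsOrthonormal

end Orthonormal

namespace IsOrthonormal

variable {m n : ℕ} {ι : Type*} [DecidableEq ι]

lemma frobNorm_sum_vecMulVec_sq {v : ι → Fin n → ℝ} (hv : IsOrthonormal v) (t : Finset ι)
    (x : ι → Fin m → ℝ) :
    frobNorm (∑ p ∈ t, vecMulVec (x p) (v p)) ^ 2 = ∑ p ∈ t, x p ⬝ᵥ x p := by
  have hrow (a : Fin m) : (∑ p ∈ t, vecMulVec (x p) (v p)) a = ∑ p ∈ t, x p a • v p := by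
    ext b
    simp [Matrix.sum_apply, vecMulVec_apply]
  simp only [frobNorm_sq, hrow, hv.sum_smul_dotProduct_self, ← sum_sq_eq_dotProduct_self]
  exact Finset.sum_comm

lemma frobNorm_orthoProj_mul_sq_le {u : ι → Fin m → ℝ} (hu : IsOrthonormal u) (t : Finset ι)
    (Z : Matrix (Fin m) (Fin n) ℝ) :
    frobNorm (orthoProj u t * Z) ^ 2 ≤ #t * specNorm Z ^ 2 := by
  have hPZ : (orthoProj u t * Z)ᵀ = ∑ i ∈ t, vecMulVec (u i ᵥ* Z) (u i) := by
    simp [orthoProj, Matrix.sum_mul, vecMulVec_mul, transpose_sum]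
  rw [← frobNorm_transpose, hPZ, hu.frobNorm_sum_vecMulVec_sq, ← nsmul_eq_mul, ← Finset.sum_const]
  refine Finset.sum_le_sum fun i _ => (dotProduct_vecMul_self_le Z (u i)).trans_eq ?_
  simp [hu i i]

end IsOrthonormal

lemma sum_mul_le_sum_of_threshold {ι : Type*} {s T : Finset ι} (hT : T ⊆ s) {a w : ι → ℝ} {τ : ℝ}
    (hτ : 0 ≤ τ) (haT : ∀ q ∈ T, τ ≤ a q) (ha : ∀ q ∈ s \ T, a q ≤ τ)
    (hw0 : ∀ q ∈ s, 0 ≤ w q) (hw1 : ∀ q ∈ T, w q ≤ 1) (hw : ∑ q ∈ s, w q ≤ #T) :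
    ∑ q ∈ s, a q * w q ≤ ∑ q ∈ T, a q := by
  have hsplit (f : ι → ℝ) : ∑ q ∈ s, f q = ∑ q ∈ s \ T, f q + ∑ q ∈ T, f q :=
    (Finset.sum_sdiff hT).symm
  have hout : ∑ q ∈ s \ T, a q * w q ≤ τ * ∑ q ∈ s \ T, w q := by
    rw [Finset.mul_sum]
    exact Finset.sum_le_sum fun q hq =>
      mul_le_mul_of_nonneg_right (ha q hq) (hw0 q (Finset.sdiff_subset hq))
  have hin : τ * ∑ q ∈ T, (1 - w q) ≤ ∑ q ∈ T, a q * (1 - w q) := by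
    rw [Finset.mul_sum]
    exact Finset.sum_le_sum fun q hq =>
      mul_le_mul_of_nonneg_right (haT q hq) (sub_nonneg.mpr (hw1 q hq))
  have hbudget : τ * ∑ q ∈ s \ T, w q ≤ τ * ∑ q ∈ T, (1 - w q) := by
    rw [Finset.sum_sub_distrib, Finset.sum_const, nsmul_one]
    exact mul_le_mul_of_nonneg_left (by linarith [hsplit w]) hτ
  calc ∑ q ∈ s, a q * w q = ∑ q ∈ s \ T, a q * w q + ∑ q ∈ T, a q * w q := hsplit _
    _ ≤ ∑ q ∈ T, a q * (1 - w q) + ∑ q ∈ T, a q * w q := by linarith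
    _ = ∑ q ∈ T, a q := by rw [← Finset.sum_add_distrib]; simp [mul_sub]

lemma sum_mul_le_sum_of_antitone {r k : ℕ} {a w : Fin r → ℝ} (ha : Antitone a)
    (ha0 : ∀ q, 0 ≤ a q) (hw0 : ∀ q, 0 ≤ w q) (hw1 : ∀ q, w q ≤ 1)
    (hw : ∑ q ∈ univ.filter (fun q : Fin r => k ≤ (q : ℕ)), w q ≤ k) :
    ∑ q ∈ univ.filter (fun q : Fin r => k ≤ (q : ℕ)), a q * w q ≤
      ∑ q ∈ univ.filter (fun q : Fin r => k ≤ (q : ℕ) ∧ (q : ℕ) < 2 * k), a q := by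
  have hT : univ.filter (fun q : Fin r => k ≤ (q : ℕ) ∧ (q : ℕ) < 2 * k) ⊆
      univ.filter (fun q : Fin r => k ≤ (q : ℕ)) :=
    fun q => by simp +contextual
  by_cases h2k : 2 * k < r
  · let q₀ : Fin r := ⟨2 * k, h2k⟩
    refine sum_mul_le_sum_of_threshold hT (ha0 q₀) (fun q hq => ha ?_) (fun q hq => ha ?_)
      (fun q _ => hw0 q) (fun q _ => hw1 q) (hw.trans_eq ?_)
    · simp only [Finset.mem_filter, Finset.mem_univ, true_and] at hq
      exact Fin.le_def.mpr hq.2.le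
    · simp only [Finset.mem_sdiff, Finset.mem_filter, Finset.mem_univ, true_and, not_and,
        not_lt] at hq
      exact Fin.le_def.mpr (hq.2 hq.1)
    · have : univ.filter (fun q : Fin r => k ≤ (q : ℕ) ∧ (q : ℕ) < 2 * k) =
          Finset.Ico ⟨k, by omega⟩ q₀ := by
        ext q
        simp [Fin.le_def, Fin.lt_def, q₀]
      rw [this, Fin.card_Ico]
      simp only [q₀]
      norm_cast
      omega
  · have : univ.filter (fun q : Fin r => k ≤ (q : ℕ) ∧ (q : ℕ) < 2 * k) =
        univ.filter (fun q : Fin r => k ≤ (q : ℕ)) := by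
      ext q
      simp only [Finset.mem_filter, Finset.mem_univ, true_and, and_iff_left_iff_imp]
      omega
    rw [this]
    exact Finset.sum_le_sum fun q _ => mul_le_of_le_one_right (ha0 q) (hw1 q)

lemma card_filter_val_lt_le (r k : ℕ) : #(univ.filter fun i : Fin r => (i : ℕ) < k) ≤ k := by
  simpa using Finset.card_le_card_of_injOn Fin.val (t := Finset.range k)
    (s := univ.filter fun i : Fin r => (i : ℕ) < k) (fun i hi => by simpa using hi)
    Fin.val_injective.injOn

lemma card_filter_val_mem_Ico_le (r k : ℕ) :
    #(univ.filter fun i : Fin r => k ≤ (i : ℕ) ∧ (i : ℕ) < 2 * k) ≤ k := by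
  have := Finset.card_le_card_of_injOn Fin.val (t := Finset.Ico k (2 * k))
    (s := univ.filter fun i : Fin r => k ≤ (i : ℕ) ∧ (i : ℕ) < 2 * k)
    (fun i hi => by simpa using hi)
    Fin.val_injective.injOn
  simp only [Nat.card_Ico] at this
  omega

namespace SVDOf

section

variable {m n : ℕ} {M : Matrix (Fin m) (Fin n) ℝ} (D : SVDOf M)

lemma isOrthonormal_u : IsOrthonormal D.u := D.u_orth

lemma isOrthonormal_v : IsOrthonormal D.v := D.v_orth

lemma of_eq_smul_vecMulVec (i : Fin (min m n)) :
    (Matrix.of fun a b => D.s i * D.u i a * D.v i b) = D.s i • vecMulVec (D.u i) (D.v i) := by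
  ext a b
  simp [vecMulVec_apply, mul_assoc]

lemma eq_sum_smul_vecMulVec : M = ∑ i, D.s i • vecMulVec (D.u i) (D.v i) := by
  simp only [← of_eq_smul_vecMulVec, ← D.decomp]

lemma trunc_eq_sum_smul_vecMulVec (k : ℕ) :
    D.trunc k = ∑ i ∈ univ.filter (fun i : Fin (min m n) => (i : ℕ) < k),
      D.s i • vecMulVec (D.u i) (D.v i) := by
  simp only [trunc, of_eq_smul_vecMulVec]

lemma sub_trunc_eq_sum_smul_vecMulVec (k : ℕ) :
    M - D.trunc k = ∑ i ∈ univ.filter (fun i : Fin (min m n) => k ≤ (i : ℕ)),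
      D.s i • vecMulVec (D.u i) (D.v i) := by
  rw [sub_eq_iff_eq_add', trunc_eq_sum_smul_vecMulVec]
  refine D.eq_sum_smul_vecMulVec.trans ?_
  simp_rw [← not_lt]
  exact (Finset.sum_filter_add_sum_filter_not _ _ _).symm

lemma mulVec_eq_sum (x : Fin n → ℝ) : M *ᵥ x = ∑ i, (D.s i * (D.v i ⬝ᵥ x)) • D.u i := by
  conv_lhs => rw [D.eq_sum_smul_vecMulVec]
  exact sum_smul_vecMulVec_mulVec _ _ _ _ x

lemma dotProduct_mulVec_self (x : Fin n → ℝ) :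
    (M *ᵥ x) ⬝ᵥ (M *ᵥ x) = ∑ i, (D.s i * (D.v i ⬝ᵥ x)) ^ 2 := by
  rw [D.mulVec_eq_sum, D.isOrthonormal_u.sum_smul_dotProduct_self]

lemma mulVec_v (i : Fin (min m n)) : M *ᵥ D.v i = D.s i • D.u i := by
  simp [D.mulVec_eq_sum, D.isOrthonormal_v _ i]

lemma sub_trunc_mulVec (k : ℕ) (x : Fin n → ℝ) :
    (M - D.trunc k) *ᵥ x = ∑ i ∈ univ.filter (fun i : Fin (min m n) => k ≤ (i : ℕ)),
      (D.s i * (D.v i ⬝ᵥ x)) • D.u i := by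
  rw [sub_trunc_eq_sum_smul_vecMulVec, sum_smul_vecMulVec_mulVec]

noncomputable def leftProj (k : ℕ) : Matrix (Fin m) (Fin m) ℝ :=
  orthoProj D.u (univ.filter fun i : Fin (min m n) => (i : ℕ) < k)

lemma leftProj_mul (k : ℕ) : D.leftProj k * M = D.trunc k := by
  rw [trunc_eq_sum_smul_vecMulVec, Finset.sum_filter]
  refine (congrArg (D.leftProj k * ·) D.eq_sum_smul_vecMulVec).trans ?_
  simp only [Matrix.mul_sum, Matrix.mul_smul, mul_vecMulVec, leftProj,
    D.isOrthonormal_u.orthoProj_mulVec_self]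
  refine Finset.sum_congr rfl fun i _ => ?_
  split_ifs <;> simp_all

lemma s_eq_zero_of_rank_le {i : Fin (min m n)} (hi : M.rank ≤ i) : D.s i = 0 := by
  by_contra hs
  have hpos (p : Fin (min m n)) (hp : p ≤ i) : D.s p ≠ 0 :=
    (((D.s_nonneg i).lt_of_ne' hs).trans_le (D.s_anti _ _ hp)).ne'
  have hspan : Submodule.span ℝ (Set.range fun p : Iic i => D.u p) ≤
      LinearMap.range M.mulVecLin := by
    rw [Submodule.span_le]
    rintro _ ⟨p, rfl⟩
    refine ⟨(D.s p)⁻¹ • D.v p, ?_⟩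
    simp [D.mulVec_v, hpos p (mem_Iic.mp p.2)]
  have hli : LinearIndependent ℝ fun p : Iic i => D.u p :=
    D.isOrthonormal_u.linearIndependent.comp _ Subtype.val_injective
  have hcard := Submodule.finrank_mono hspan
  rw [finrank_span_eq_card hli, Fintype.card_coe, Fin.card_Iic] at hcard
  rw [Matrix.rank] at hi
  omega

lemma sq_s_mul_le_of_mem_span (j : Fin (min m n)) (c : Fin (min m n) → ℝ) :
    D.s j ^ 2 * ((∑ i ∈ Iic j, c i • D.v i) ⬝ᵥ (∑ i ∈ Iic j, c i • D.v i)) ≤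
      (M *ᵥ ∑ i ∈ Iic j, c i • D.v i) ⬝ᵥ (M *ᵥ ∑ i ∈ Iic j, c i • D.v i) := by
  rw [D.dotProduct_mulVec_self, D.isOrthonormal_v.sum_smul_dotProduct_self, Finset.mul_sum]
  calc ∑ i ∈ Iic j, D.s j ^ 2 * c i ^ 2
      ≤ ∑ i ∈ Iic j, (D.s i * (D.v i ⬝ᵥ ∑ l ∈ Iic j, c l • D.v l)) ^ 2 := by
        refine Finset.sum_le_sum fun i hi => ?_
        rw [D.isOrthonormal_v.dotProduct_sum_smul, if_pos hi, mul_pow]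
        have := D.s_anti _ _ (mem_Iic.mp hi)
        gcongr
        exact D.s_nonneg j
    _ ≤ _ := Finset.sum_le_univ_sum_of_nonneg fun i => sq_nonneg _

lemma dotProduct_mulVec_self_le_of_orthogonal (j : Fin (min m n)) (x : Fin n → ℝ)
    (hx : ∀ i < j, D.v i ⬝ᵥ x = 0) :
    (M *ᵥ x) ⬝ᵥ (M *ᵥ x) ≤ D.s j ^ 2 * (x ⬝ᵥ x) := by
  rw [D.dotProduct_mulVec_self]
  calc ∑ i, (D.s i * (D.v i ⬝ᵥ x)) ^ 2 ≤ ∑ i, D.s j ^ 2 * (D.v i ⬝ᵥ x) ^ 2 := by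
        refine Finset.sum_le_sum fun i _ => ?_
        rcases lt_or_ge i j with hij | hij
        · simp [hx i hij]
        · rw [mul_pow]
          have := D.s_anti _ _ hij
          gcongr
          exact D.s_nonneg i
    _ ≤ D.s j ^ 2 * (x ⬝ᵥ x) := by
        rw [← Finset.mul_sum]
        exact mul_le_mul_of_nonneg_left (D.isOrthonormal_v.sum_sq_dotProduct_le _ x) (sq_nonneg _)

lemma sum_sq_s_filter_le_eq_of_rank_le {r : ℕ} (hr : M.rank ≤ r) (k : ℕ) :
    ∑ q ∈ univ.filter (fun q : Fin (min m n) => k ≤ (q : ℕ)), D.s q ^ 2 =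
      ∑ q ∈ univ.filter (fun q : Fin (min m n) => k ≤ (q : ℕ) ∧ (q : ℕ) < r), D.s q ^ 2 := by
  rw [Finset.sum_filter, Finset.sum_filter]
  refine Finset.sum_congr rfl fun q _ => ?_
  by_cases hq : (q : ℕ) < r
  · simp [hq]
  · simp [hq, D.s_eq_zero_of_rank_le (hr.trans (not_lt.mp hq))]

lemma frobNorm_mul_sq {l : ℕ} (Q : Matrix (Fin l) (Fin m) ℝ) :
    frobNorm (Q * M) ^ 2 = ∑ i, ((Q * M) *ᵥ D.v i) ⬝ᵥ ((Q * M) *ᵥ D.v i) := by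
  have hcol (i : Fin (min m n)) : (Q * M) *ᵥ D.v i = D.s i • (Q *ᵥ D.u i) := by
    rw [← mulVec_mulVec, D.mulVec_v, mulVec_smul]
  have hQM : Q * M = ∑ i, vecMulVec ((Q * M) *ᵥ D.v i) (D.v i) := by
    simp only [hcol, smul_vecMulVec]
    refine (congrArg (Q * ·) D.eq_sum_smul_vecMulVec).trans ?_
    simp [Matrix.mul_sum, Matrix.mul_smul, mul_vecMulVec]
  rw [hQM, D.isOrthonormal_v.frobNorm_sum_vecMulVec_sq]
  simp only [← hQM]

lemma sum_sq_s_mul_sum_sq_dotProduct_le {ι : Type*} [DecidableEq ι] {w : ι → Fin n → ℝ}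
    (hw : IsOrthonormal w) {t : Finset ι} {k : ℕ}
    (ht : #t ≤ k) :
    ∑ q ∈ univ.filter (fun q : Fin (min m n) => k ≤ (q : ℕ)),
        D.s q ^ 2 * ∑ i ∈ t, (D.v q ⬝ᵥ w i) ^ 2 ≤
      ∑ q ∈ univ.filter (fun q : Fin (min m n) => k ≤ (q : ℕ) ∧ (q : ℕ) < 2 * k), D.s q ^ 2 := by
  refine sum_mul_le_sum_of_antitone
    (fun i j hij => pow_le_pow_left₀ (D.s_nonneg j) (D.s_anti i j hij) 2)
    (fun q => sq_nonneg _) (fun q => Finset.sum_nonneg fun _ _ => sq_nonneg _) (fun q => ?_) ?_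
  · simp_rw [dotProduct_comm (D.v q)]
    exact (hw.sum_sq_dotProduct_le t (D.v q)).trans_eq (by simp [D.isOrthonormal_v q q])
  · rw [Finset.sum_comm]
    calc ∑ i ∈ t, ∑ q ∈ univ.filter (fun q : Fin (min m n) => k ≤ (q : ℕ)), (D.v q ⬝ᵥ w i) ^ 2
        ≤ ∑ i ∈ t, w i ⬝ᵥ w i :=
          Finset.sum_le_sum fun i _ => D.isOrthonormal_v.sum_sq_dotProduct_le _ (w i)
      _ ≤ k := by simpa [hw _ _] using ht

end

theorem s_le_add_specNorm {m n : ℕ} {H Z : Matrix (Fin m) (Fin n) ℝ} (DH : SVDOf H)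
    (D : SVDOf (H + Z)) (j : Fin (min m n)) : D.s j ≤ DH.s j + specNorm Z := by
  obtain ⟨c, ⟨i, hi, hci⟩, hc⟩ :=
    exists_sum_smul_orthogonal D.v DH.v (s := Iic j) (t := Iio j) (by simp)
  set x := ∑ i ∈ Iic j, c i • D.v i
  have hx : 0 < ‖WithLp.toLp 2 x‖ := by
    rw [← sqrt_dotProduct_self, Real.sqrt_pos, D.isOrthonormal_v.sum_smul_dotProduct_self]
    exact Finset.sum_pos' (fun _ _ => sq_nonneg _) ⟨i, hi, by positivity⟩
  have hlow : D.s j * ‖WithLp.toLp 2 x‖ ≤ ‖WithLp.toLp 2 ((H + Z) *ᵥ x)‖ := by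
    rw [← pow_le_pow_iff_left₀ (mul_nonneg (D.s_nonneg j) hx.le) (norm_nonneg _) two_ne_zero,
      mul_pow, norm_toLp_sq, norm_toLp_sq]
    exact D.sq_s_mul_le_of_mem_span j c
  have hup : ‖WithLp.toLp 2 (H *ᵥ x)‖ ≤ DH.s j * ‖WithLp.toLp 2 x‖ :=
    norm_toLp_le_of_sq_le (DH.s_nonneg j)
      (DH.dotProduct_mulVec_self_le_of_orthogonal j x fun l hl => hc l (mem_Iio.mpr hl))
  refine le_of_mul_le_mul_right ?_ hx
  calc D.s j * ‖WithLp.toLp 2 x‖ ≤ ‖WithLp.toLp 2 ((H + Z) *ᵥ x)‖ := hlow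
    _ ≤ ‖WithLp.toLp 2 (H *ᵥ x)‖ + ‖WithLp.toLp 2 (Z *ᵥ x)‖ := by
        rw [add_mulVec, WithLp.toLp_add]
        exact norm_add_le _ _
    _ ≤ (DH.s j + specNorm Z) * ‖WithLp.toLp 2 x‖ := by
        rw [add_mul]
        exact add_le_add hup (norm_toLp_mulVec_le Z x)

section

variable {m n : ℕ} {H Z : Matrix (Fin m) (Fin n) ℝ} (DH : SVDOf H) (D : SVDOf (H + Z)) (k : ℕ)

lemma trunc_sub_eq : D.trunc k - H = D.leftProj k * Z - (1 - D.leftProj k) * H := by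
  rw [← D.leftProj_mul, Matrix.mul_add, Matrix.sub_mul, Matrix.one_mul]
  abel

lemma one_sub_leftProj_mul_mulVec_v_le (i : Fin (min m n)) :
    (((1 - D.leftProj k) * H) *ᵥ DH.v i) ⬝ᵥ (((1 - D.leftProj k) * H) *ᵥ DH.v i) ≤ DH.s i ^ 2 := by
  rw [← mulVec_mulVec, DH.mulVec_v, mulVec_smul, sub_mulVec, one_mulVec, smul_dotProduct,
    dotProduct_smul, smul_eq_mul, smul_eq_mul, ← mul_assoc, ← sq]
  calc DH.s i ^ 2 * ((DH.u i - D.leftProj k *ᵥ DH.u i) ⬝ᵥ (DH.u i - D.leftProj k *ᵥ DH.u i))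
      ≤ DH.s i ^ 2 * (DH.u i ⬝ᵥ DH.u i) :=
        mul_le_mul_of_nonneg_left (D.isOrthonormal_u.dotProduct_self_sub_orthoProj_le _ _)
          (sq_nonneg _)
    _ = DH.s i ^ 2 := by simp [DH.isOrthonormal_u i i]

lemma one_sub_leftProj_mul_mulVec_le (x : Fin n → ℝ) (hx : x ⬝ᵥ x = 1) :
    (((1 - D.leftProj k) * H) *ᵥ x) ⬝ᵥ (((1 - D.leftProj k) * H) *ᵥ x) ≤
      2 * ∑ q ∈ univ.filter (fun q : Fin (min m n) => k ≤ (q : ℕ)), (D.s q * (D.v q ⬝ᵥ x)) ^ 2 +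
        2 * specNorm Z ^ 2 := by
  have hR : (1 - D.leftProj k) * H = (H + Z - D.trunc k) - (1 - D.leftProj k) * Z := by
    rw [← D.leftProj_mul, Matrix.mul_add, Matrix.sub_mul, Matrix.sub_mul, Matrix.one_mul,
      Matrix.one_mul]
    abel
  have hZ : (((1 - D.leftProj k) * Z) *ᵥ x) ⬝ᵥ (((1 - D.leftProj k) * Z) *ᵥ x) ≤
      specNorm Z ^ 2 := by
    rw [← mulVec_mulVec, sub_mulVec, one_mulVec]
    refine (D.isOrthonormal_u.dotProduct_self_sub_orthoProj_le _ _).trans ?_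
    simpa [hx] using dotProduct_mulVec_self_le Z x
  rw [hR, sub_mulVec]
  refine (dotProduct_self_sub_le _ _).trans ?_
  rw [D.sub_trunc_mulVec, D.isOrthonormal_u.sum_smul_dotProduct_self]
  linarith

lemma sum_sq_s_Ico_le :
    ∑ q ∈ univ.filter (fun q : Fin (min m n) => k ≤ (q : ℕ) ∧ (q : ℕ) < 2 * k), D.s q ^ 2 ≤
      2 * ∑ q ∈ univ.filter (fun q : Fin (min m n) => k ≤ (q : ℕ)), DH.s q ^ 2 +
        2 * k * specNorm Z ^ 2 := by
  set T := univ.filter (fun q : Fin (min m n) => k ≤ (q : ℕ) ∧ (q : ℕ) < 2 * k)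
  calc ∑ q ∈ T, D.s q ^ 2 ≤ ∑ q ∈ T, (2 * DH.s q ^ 2 + 2 * specNorm Z ^ 2) :=
        Finset.sum_le_sum fun q _ => by
          have := s_le_add_specNorm DH D q
          nlinarith [D.s_nonneg q, sq_nonneg (DH.s q - specNorm Z)]
    _ = 2 * ∑ q ∈ T, DH.s q ^ 2 + #T * (2 * specNorm Z ^ 2) := by
        rw [Finset.sum_add_distrib, Finset.mul_sum, Finset.sum_const, nsmul_eq_mul]
    _ ≤ 2 * ∑ q ∈ univ.filter (fun q : Fin (min m n) => k ≤ (q : ℕ)), DH.s q ^ 2 +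
          k * (2 * specNorm Z ^ 2) := by
        gcongr
        · intro q
          simp +contextual [T]
        · exact_mod_cast card_filter_val_mem_Ico_le _ k
    _ = _ := by ring

lemma frobNorm_one_sub_leftProj_mul_sq_le :
    frobNorm ((1 - D.leftProj k) * H) ^ 2 ≤
      5 * ∑ q ∈ univ.filter (fun q : Fin (min m n) => k ≤ (q : ℕ)), DH.s q ^ 2 +
        6 * k * specNorm Z ^ 2 := by
  set S := univ.filter (fun q : Fin (min m n) => k ≤ (q : ℕ))
  set K := univ.filter (fun q : Fin (min m n) => (q : ℕ) < k)
  have hhead : ∑ i ∈ K, (((1 - D.leftProj k) * H) *ᵥ DH.v i) ⬝ᵥ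
        (((1 - D.leftProj k) * H) *ᵥ DH.v i) ≤
      2 * ∑ q ∈ S, D.s q ^ 2 * ∑ i ∈ K, (D.v q ⬝ᵥ DH.v i) ^ 2 + k * (2 * specNorm Z ^ 2) := by
    calc _ ≤ ∑ i ∈ K, (2 * ∑ q ∈ S, (D.s q * (D.v q ⬝ᵥ DH.v i)) ^ 2 + 2 * specNorm Z ^ 2) :=
          Finset.sum_le_sum fun i _ =>
            D.one_sub_leftProj_mul_mulVec_le k (DH.v i) (by simp [DH.isOrthonormal_v i i])
      _ = 2 * ∑ q ∈ S, D.s q ^ 2 * ∑ i ∈ K, (D.v q ⬝ᵥ DH.v i) ^ 2 + #K * (2 * specNorm Z ^ 2) := by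
          simp only [Finset.sum_add_distrib, Finset.sum_const, nsmul_eq_mul, ← Finset.mul_sum,
            mul_pow]
          rw [Finset.sum_comm]
          simp only [Finset.mul_sum]
      _ ≤ _ := by
          gcongr
          exact_mod_cast card_filter_val_lt_le _ k
  have htail : ∑ i ∈ univ.filter (fun q : Fin (min m n) => ¬ (q : ℕ) < k),
      (((1 - D.leftProj k) * H) *ᵥ DH.v i) ⬝ᵥ (((1 - D.leftProj k) * H) *ᵥ DH.v i) ≤
      ∑ q ∈ S, DH.s q ^ 2 := by
    simp only [not_lt]
    exact Finset.sum_le_sum fun i _ => one_sub_leftProj_mul_mulVec_v_le DH D k i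
  rw [DH.frobNorm_mul_sq,
    ← Finset.sum_filter_add_sum_filter_not _ fun q : Fin (min m n) => (q : ℕ) < k]
  have hweights := D.sum_sq_s_mul_sum_sq_dotProduct_le DH.isOrthonormal_v
    (card_filter_val_lt_le (min m n) k)
  linarith [sum_sq_s_Ico_le DH D k]

end

end SVDOf

theorem frobNorm_trunc_sub_sq_le {m n : ℕ} {H Z : Matrix (Fin m) (Fin n) ℝ} (DH : SVDOf H)
    (D : SVDOf (H + Z)) (k : ℕ) :
    frobNorm (D.trunc k - H) ^ 2 ≤
      14 * k * specNorm Z ^ 2 +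
        10 * ∑ q ∈ univ.filter (fun q : Fin (min m n) => k ≤ (q : ℕ)), DH.s q ^ 2 := by
  have hPZ : frobNorm (D.leftProj k * Z) ^ 2 ≤ k * specNorm Z ^ 2 :=
    (D.isOrthonormal_u.frobNorm_orthoProj_mul_sq_le _ Z).trans
      (by gcongr; exact_mod_cast card_filter_val_lt_le _ k)
  rw [D.trunc_sub_eq]
  linarith [frobNorm_sub_sq_le (D.leftProj k * Z) ((1 - D.leftProj k) * H),
    SVDOf.frobNorm_one_sub_leftProj_mul_sq_le DH D k]

theorem stmt4_general {m n : ℕ} (H Z : Matrix (Fin m) (Fin n) ℝ) (n₀ : ℕ)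
    (hrank : H.rank = n₀) (DH : SVDOf H) (DHhat : SVDOf (H + Z))
    (k : ℕ) :
    frobNorm (DHhat.trunc k - H) ^ 2 ≤
      18 * ((k : ℝ) * specNorm Z ^ 2 +
        ∑ i ∈ Finset.univ.filter
          (fun i : Fin (min m n) => k ≤ (i : ℕ) ∧ (i : ℕ) < n₀), DH.s i ^ 2) := by
  have hbound := frobNorm_trunc_sub_sq_le DH DHhat k
  rw [DH.sum_sq_s_filter_le_eq_of_rank_le hrank.le] at hbound
  have htail : 0 ≤ ∑ i ∈ Finset.univ.filter
      (fun i : Fin (min m n) => k ≤ (i : ℕ) ∧ (i : ℕ) < n₀), DH.s i ^ 2 :=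
    Finset.sum_nonneg fun _ _ => sq_nonneg _
  have hkZ : 0 ≤ (k : ℝ) * specNorm Z ^ 2 := by positivity
  linarith

/-- `‖Π_k(H+Z) − H‖_F² ≤ 18 (k‖Z‖₂² + Σ_{i=k+1}^{n₀} s_i(H)²)` for `k = 0,…,n₀`. -/
theorem stmt4 {m n : ℕ} (H Z : Matrix (Fin m) (Fin n) ℝ) (n₀ : ℕ)
    (hrank : H.rank = n₀) (DH : SVDOf H) (DHhat : SVDOf (H + Z))
    (k : ℕ) (hk : k ≤ n₀) :
    frobNorm (DHhat.trunc k - H) ^ 2 ≤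
      18 * ((k : ℝ) * specNorm Z ^ 2 +
        ∑ i ∈ Finset.univ.filter
          (fun i : Fin (min m n) => k ≤ (i : ℕ) ∧ (i : ℕ) < n₀), DH.s i ^ 2) :=
  stmt4_general H Z n₀ hrank DH DHhat k
end Norms
end
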